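/- Let p > 3 be a prime, k a number field, and E an elliptic curve over k. Suppose that G₁, viewed as a subgroup of GL₂(F_p) via its action on E[p], contains a nontrivial scalar multiple of the identity matrix (i.e. λ·I with λ ∈ F_p^*, λ ≠ 1). Then H¹(G_n, E[p^n]) = 0 for every n ∈ N. -/

import Mathlib

open WeierstrassCurve WeierstrassCurve.Affine

namespace LGD

open scoped Classical

variable {k : Type*} [Field k] (W : WeierstrassCurve k)

local notation "kb" => AlgebraicClosure k

/-- The multiplicative group structure on `AddAut A` (composition), as in the older Mathlib,
where `AddAut A` carried a `Group` instance; it now carries an `AddGroup` instance instead. -/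
instance addAutGroup {A : Type*} [Add A] : Group (AddAut A) where
  mul g h := AddEquiv.trans h g
  one := AddEquiv.refl _
  inv := AddEquiv.symm
  mul_assoc _ _ _ := rfl
  one_mul _ := rfl
  mul_one _ := rfl
  inv_mul_cancel := AddEquiv.self_trans_symm

/-- The action of the absolute Galois group of `k` on the points of `W` over an
algebraic closure of `k`. -/
noncomputable def galHom : (kb ≃ₐ[k] kb) →* AddAut (W.toAffine⁄kb).Point where
  toFun σ :=
    { toFun := Point.map (W' := W.toAffine) σ.toAlgHom
      invFun := Point.map (W' := W.toAffine) σ.symm.toAlgHom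
      left_inv := fun P => by
        rw [Point.map_map]
        have h : (σ.symm.toAlgHom.comp σ.toAlgHom : kb →ₐ[k] kb) = AlgHom.id k kb := by
          ext x; exact σ.symm_apply_apply x
        rw [h]; cases P <;> rfl
      right_inv := fun P => by
        rw [Point.map_map]
        have h : (σ.toAlgHom.comp σ.symm.toAlgHom : kb →ₐ[k] kb) = AlgHom.id k kb := by
          ext x; exact σ.apply_symm_apply x
        rw [h]; cases P <;> rfl
      map_add' := map_add _ }
  map_one' := by
    ext P
    show Point.map (W' := W.toAffine) (1 : kb ≃ₐ[k] kb).toAlgHom P = P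
    cases P <;> rfl
  map_mul' σ τ := by
    ext P
    show Point.map (W' := W.toAffine) (σ * τ).toAlgHom P = Point.map (W' := W.toAffine) σ.toAlgHom (Point.map (W' := W.toAffine) τ.toAlgHom P)
    rw [Point.map_map]
    rfl

/-- The subgroup of `n`-torsion points of `W` over an algebraic closure, i.e. `E[n]`. -/
noncomputable def tors (n : ℕ) : AddSubgroup (W.toAffine⁄kb).Point where
  carrier := {Q | n • Q = 0}
  zero_mem' := smul_zero n
  add_mem' := by
    intro a b ha hb
    simp only [Set.mem_setOf_eq] at *
    rw [nsmul_add, ha, hb, add_zero]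
  neg_mem' := by
    intro a ha
    simp only [Set.mem_setOf_eq] at *
    have h : n • (-a) + n • a = 0 := by rw [← nsmul_add, neg_add_cancel, smul_zero]
    rwa [ha, add_zero] at h

/-- Every additive automorphism of the points restricts to the `n`-torsion subgroup. -/
noncomputable def restrictTors (n : ℕ) : AddAut (W.toAffine⁄kb).Point →* AddAut ↥(tors W n) where
  toFun e :=
    { toFun := fun x => ⟨e x, by
        have hx : n • (x : (W.toAffine⁄kb).Point) = 0 := x.2
        show n • (e (x : (W.toAffine⁄kb).Point)) = 0
        rw [← map_nsmul, hx, map_zero]⟩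
      invFun := fun x => ⟨e.symm x, by
        have hx : n • (x : (W.toAffine⁄kb).Point) = 0 := x.2
        show n • (e.symm (x : (W.toAffine⁄kb).Point)) = 0
        rw [← map_nsmul, hx, map_zero]⟩
      left_inv := fun x => Subtype.ext (e.symm_apply_apply x)
      right_inv := fun x => Subtype.ext (e.apply_symm_apply x)
      map_add' := fun x y => Subtype.ext (by
        show e ((x : (W.toAffine⁄kb).Point) + (y : (W.toAffine⁄kb).Point)) = e (x : (W.toAffine⁄kb).Point) + e (y : (W.toAffine⁄kb).Point)
        exact map_add e _ _) }
  map_one' := by ext x; rfl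
  map_mul' e f := by ext x; rfl

/-- The Galois representation of the absolute Galois group of `k` on the `n`-torsion
points `E[n]`; the Galois group `G_n = Gal(K_n/k)` of the paper, viewed as a subgroup of
`GL₂(ℤ/nℤ)`, is (isomorphic to) the range of this homomorphism. -/
noncomputable def torsGalHom (n : ℕ) : (kb ≃ₐ[k] kb) →* AddAut ↥(tors W n) :=
  (restrictTors W n).comp (galHom W)

/-- The set of all affine coordinates of the `n`-torsion points of `W`. -/
def torsCoords (n : ℕ) : Set kb :=
  {c | ∃ (x y : kb) (h : (W.baseChange kb).toAffine.Nonsingular x y),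
    Point.some x y h ∈ tors W n ∧ (c = x ∨ c = y)}

/-- The `n`-division field `K_n = k(E[n])`, generated over `k` by the coordinates of the
`n`-torsion points. -/
noncomputable def KK (n : ℕ) : IntermediateField k kb :=
  IntermediateField.adjoin k (torsCoords W n)

/-- A `1`-cocycle of a subgroup `G` of the automorphisms of an abelian group `T`,
with values in `T`. -/
def IsCocycle {T : Type*} [AddCommGroup T] {G : Subgroup (AddAut T)} (Z : G → T) : Prop :=
  ∀ g h : G, Z (g * h) = Z g + (g : AddAut T) (Z h)

/-- A `1`-coboundary: `Z g = g • w - w` for a fixed `w`.  A `1`-cocycle represents the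
trivial class in `H¹(G, T)` precisely when it is a coboundary. -/
def IsCoboundary {T : Type*} [AddCommGroup T] {G : Subgroup (AddAut T)} (Z : G → T) : Prop :=
  ∃ w : T, ∀ g : G, Z g = (g : AddAut T) w - w

/-- The local conditions of Dvornicich–Zannier: for each `g` separately, `Z g` is of the
form `g • w - w`.  A class in `H¹(G, T)` lies in `H¹_loc(G, T)` precisely when (any of)
its representing cocycles satisfies these conditions. -/
def SatisfiesLocalConditions {T : Type*} [AddCommGroup T] {G : Subgroup (AddAut T)}
    (Z : G → T) : Prop :=
  ∀ g : G, ∃ w : T, Z g = (g : AddAut T) w - w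


/-- Key abstract lemma: if an additive endomorphism `ψ` acts as multiplication by `l`
on the `p`-torsion, then `ψ ^ (p ^ m)` acts as multiplication by `l ^ (p ^ m)` on the
`p ^ (m + 1)`-torsion. -/
lemma pow_smul_key {A : Type*} [AddCommGroup A] (p l : ℕ) (hp : 2 ≤ p)
    (ψ : Module.End ℤ A)
    (h1 : ∀ y : A, p • y = 0 → ψ y = l • y) :
    ∀ m, ∀ x : A, p ^ (m + 1) • x = 0 → (ψ ^ p ^ m) x = l ^ p ^ m • x := by
  intro m
  induction m with
  | zero =>
    intro x hx
    simpa using h1 x (by simpa using hx)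
  | succ m ih =>
    intro x hx
    set c := l ^ p ^ m with hc
    set H := ψ ^ p ^ m with hH
    set S : Module.End ℤ A := c • 1 with hS
    set E := H - S with hEdef
    have hSapp : ∀ y : A, S y = c • y := fun y => rfl
    have hE : ∀ y : A, p ^ (m + 1) • y = 0 → E y = 0 := by
      intro y hy
      rw [hEdef, LinearMap.sub_apply, ih y hy, hSapp, sub_self]
    have hpEx : p • E x = 0 := by
      rw [← map_nsmul]
      exact hE (p • x) (by rw [smul_smul, ← pow_succ]; exact hx)
    have hEEx : E (E x) = 0 := by
      refine hE (E x) ?_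
      rw [pow_succ, mul_smul, hpEx, smul_zero]
    have hcomm : Commute S E := by
      unfold Commute SemiconjBy
      rw [hS, smul_mul_assoc, one_mul, mul_smul_comm, mul_one]
    have hHSE : H = S + E := by rw [hEdef]; abel
    have hexp : H ^ p = ∑ j ∈ Finset.range (p + 1),
        S ^ j * E ^ (p - j) * (p.choose j : Module.End ℤ A) := by
      rw [hHSE, hcomm.add_pow]
    have hterm : ∀ j, (S ^ j * E ^ (p - j) * (p.choose j : Module.End ℤ A)) x
        = p.choose j • c ^ j • (E ^ (p - j)) x := by
      intro j
      have hSj : (S ^ j : Module.End ℤ A) = c ^ j • 1 := by rw [hS, smul_pow, one_pow]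
      rw [Module.End.mul_apply, Module.End.mul_apply, Module.End.natCast_apply,
        map_nsmul, map_nsmul, hSj, LinearMap.smul_apply, Module.End.one_apply]
    have hEj : ∀ j, 2 ≤ j → (E ^ j) x = 0 := by
      intro j hj
      obtain ⟨i, rfl⟩ : ∃ i, j = i + 2 := ⟨j - 2, by omega⟩
      rw [pow_add, Module.End.mul_apply, pow_two, Module.End.mul_apply, hEEx, map_zero]
    obtain ⟨q, hq⟩ : ∃ q, p = q + 2 := ⟨p - 2, by omega⟩
    have hsum : (H ^ p) x = c ^ p • x := by
      rw [hexp, LinearMap.sum_apply]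
      have : p + 1 = q + 1 + 1 + 1 := by omega
      rw [this, Finset.sum_range_succ, Finset.sum_range_succ]
      rw [Finset.sum_eq_zero, hterm, hterm]
      · have h1' : p - (q + 1) = 1 := by omega
        have h2' : p - (q + 1 + 1) = 0 := by omega
        rw [h1', h2', pow_one, pow_zero, Module.End.one_apply]
        have hch1 : p.choose (q + 1 + 1) = 1 := by rw [← hq, Nat.choose_self]
        have hch2 : p.choose (q + 1) = p := by
          have : q + 1 = p - 1 := by omega
          rw [this, Nat.choose_symm (by omega), Nat.choose_one_right]
        rw [hch1, hch2, one_smul, smul_comm p, hpEx, smul_zero, zero_add, zero_add,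
          show q + 2 = p from by omega]
      · intro j hj
        rw [hterm, hEj (p - j) (by simp at hj; omega), smul_zero, smul_zero]
    calc (ψ ^ p ^ (m + 1)) x = (H ^ p) x := by rw [hH, ← pow_mul, ← pow_succ]
      _ = c ^ p • x := hsum
      _ = l ^ p ^ (m + 1) • x := by rw [hc, ← pow_mul, ← pow_succ]

/-- Lemma 12 of the paper: if `G₁` contains a nontrivial scalar multiple
of the identity (`λ·I` with `λ ∈ 𝔽_p^*`, `λ ≠ 1`), then `H¹(G_n, E[pⁿ]) = 0` for every
`n`. -/
theorem H1_eq_zero_of_scalar_mem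
    (p : ℕ) (hp : p.Prime) (hp3 : 3 < p)
    [NumberField k] [W.IsElliptic]
    -- `G₁` contains a nontrivial scalar `λ·I`, `λ ∈ 𝔽_p^*`, `λ ≠ 1`
    (hscalar : ∃ g ∈ (torsGalHom W p).range, ∃ lam : ZMod p,
      lam ≠ 0 ∧ lam ≠ 1 ∧ ∀ x : ↥(tors W p), g x = lam.val • x) :
    -- `H¹(G_n, E[pⁿ]) = 0` for every `n ∈ ℕ`
    ∀ n : ℕ, ∀ Z : (torsGalHom W (p ^ n)).range → ↥(tors W (p ^ n)),
      IsCocycle Z → IsCoboundary Z := by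
  obtain ⟨g, ⟨σ, hσ⟩, lam, hl0, hl1, hact⟩ := hscalar
  haveI : Fact p.Prime := ⟨hp⟩
  set l := lam.val with hldef
  have hg1 : ∀ y : (W.toAffine⁄kb).Point, p • y = 0 → galHom W σ y = l • y := by
    intro y hy
    have hy' : y ∈ tors W p := hy
    have h := hact ⟨y, hy'⟩
    rw [← hσ] at h
    have hv := congrArg Subtype.val h
    rw [AddSubgroup.coe_nsmul] at hv
    exact hv
  intro n
  rcases n with _ | m
  · intro Z hZ
    refine ⟨0, fun h => ?_⟩
    have h2 : p ^ 0 • ((Z h : ↥(tors W (p ^ 0))) : (W.toAffine⁄kb).Point) = 0 := (Z h).2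
    simp only [pow_zero, one_smul] at h2
    have h3 : (h : AddAut ↥(tors W (p ^ 0))) 0 - 0 = 0 := by rw [map_zero, sub_self]
    exact (Subtype.ext h2).trans h3.symm
  · set N := p ^ (m + 1) with hN
    intro Z hZ
    haveI : NeZero N := ⟨pow_ne_zero _ hp.ne_zero⟩
    have hNT : ∀ x : ↥(tors W N), N • x = 0 := by
      intro x
      have hx : N • (x : (W.toAffine⁄kb).Point) = 0 := x.2
      exact Subtype.ext (by rw [AddSubgroup.coe_nsmul, ZeroMemClass.coe_zero]; exact hx)
    have hcongr : ∀ (s t : ℕ), ((s : ZMod N) = (t : ZMod N)) →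
        ∀ x : ↥(tors W N), s • x = t • x := by
      intro s t hst x
      have hmod : s % N = t % N := (ZMod.natCast_eq_natCast_iff s t N).mp hst
      have key : ∀ u : ℕ, u • x = (u % N) • x := by
        intro u
        calc u • x = (N * (u / N) + u % N) • x := by rw [Nat.div_add_mod]
          _ = (N * (u / N)) • x + (u % N) • x := add_smul _ _ _
          _ = (u / N) • (N • x) + (u % N) • x := by rw [mul_comm, mul_smul]
          _ = (u % N) • x := by rw [hNT, smul_zero, zero_add]
      rw [key s, key t, hmod]
    set gA := torsGalHom W N σ with hgA
    set φ := galHom W σ with hφ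
    have hcoe : ∀ (j : ℕ) (x : ↥(tors W N)),
        ((gA ^ j) x : (W.toAffine⁄kb).Point) = (φ ^ j) (x : (W.toAffine⁄kb).Point) := by
      intro j
      induction j with
      | zero => intro x; rw [pow_zero, pow_zero]; rfl
      | succ j ih =>
        intro x
        rw [pow_succ, pow_succ]
        exact ih (gA x)
    set ψ : Module.End ℤ (W.toAffine⁄kb).Point :=
      AddMonoidHom.toIntLinearMap (AddMonoidHom.mk' (fun y => φ y) (map_add φ)) with hψ
    have hψpow : ∀ (j : ℕ) (y : (W.toAffine⁄kb).Point), (ψ ^ j) y = (φ ^ j) y := by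
      intro j
      induction j with
      | zero => intro y; rw [pow_zero, pow_zero]; rfl
      | succ j ih =>
        intro y
        rw [pow_succ, pow_succ, Module.End.mul_apply]
        exact ih (φ y)
    set c := l ^ p ^ m with hcdef
    have hscal : ∀ x : ↥(tors W N), (gA ^ p ^ m) x = c • x := by
      intro x
      apply Subtype.ext
      rw [AddSubgroup.coe_nsmul, hcoe, ← hψpow]
      exact pow_smul_key p l (by omega) ψ (fun y hy => hg1 y hy) m (x : (W.toAffine⁄kb).Point) x.2
    have hmem : gA ^ p ^ m ∈ (torsGalHom W N).range := ⟨σ ^ p ^ m, by rw [map_pow]⟩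
    set cA : (torsGalHom W N).range := ⟨gA ^ p ^ m, hmem⟩ with hcA
    have hcApp : ∀ x, (cA : AddAut ↥(tors W N)) x = c • x := hscal
    have hcentral : ∀ h : (torsGalHom W N).range, cA * h = h * cA := by
      intro h
      apply Subtype.ext
      refine AddEquiv.ext fun x => ?_
      show (cA : AddAut ↥(tors W N)) ((h : AddAut ↥(tors W N)) x)
        = (h : AddAut ↥(tors W N)) ((cA : AddAut ↥(tors W N)) x)
      rw [hcApp, hcApp, map_nsmul]
    -- arithmetic: c - 1 is a unit mod N
    have hlne : l ≠ 0 := fun h0 => hl0 ((ZMod.val_eq_zero lam).mp h0)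
    have hcpos : 0 < c := pow_pos (Nat.pos_of_ne_zero hlne) _
    set d := c - 1 with hd
    have hdc : d + 1 = c := Nat.sub_add_cancel hcpos
    have hcp : ((c : ℕ) : ZMod p) = lam := by
      have hfermat : ∀ j : ℕ, lam ^ p ^ j = lam := by
        intro j
        induction j with
        | zero => rw [pow_zero, pow_one]
        | succ j ih => rw [pow_succ, pow_mul, ih, ZMod.pow_card]
      rw [hcdef, Nat.cast_pow, hldef, ZMod.natCast_rightInverse lam, hfermat]
    have hdp : ¬ p ∣ d := by
      intro hdvd
      have h0 : ((d : ℕ) : ZMod p) = 0 := (ZMod.natCast_eq_zero_iff d p).mpr hdvd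
      have h2 : ((d : ℕ) : ZMod p) = lam - 1 := by
        have h3 := congrArg (Nat.cast : ℕ → ZMod p) hdc
        push_cast at h3
        rw [hcp] at h3
        exact eq_sub_of_add_eq h3
      rw [h2] at h0
      exact hl1 (by rwa [sub_eq_zero] at h0)
    have hcop : Nat.Coprime d N := Nat.Coprime.pow_right _ (hp.coprime_iff_not_dvd.mpr hdp).symm
    obtain ⟨v, hv⟩ := (ZMod.isUnit_iff_coprime d N).mpr hcop
    set a := (↑(v⁻¹) : ZMod N).val with ha
    have hinv : ((a * d : ℕ) : ZMod N) = 1 := by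
      push_cast
      rw [ha, ZMod.natCast_rightInverse, ← hv, ← Units.val_mul, inv_mul_cancel, Units.val_one]
    have hkey2 : ((a * c : ℕ) : ZMod N) = ((1 + a : ℕ) : ZMod N) := by
      calc ((a * c : ℕ) : ZMod N) = ((a * d + a : ℕ) : ZMod N) := by
            rw [show a * c = a * d + a from by rw [← hdc]; ring]
        _ = ((a * d : ℕ) : ZMod N) + a := by push_cast; ring
        _ = 1 + a := by rw [hinv]
        _ = ((1 + a : ℕ) : ZMod N) := by push_cast; ring
    refine ⟨a • Z cA, fun h => ?_⟩
    have e1 := hZ cA h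
    have e2 := hZ h cA
    rw [hcentral h, e2, hcApp] at e1
    -- e1 : Z h + h (Z cA) = Z cA + c • Z h
    have e4 : (h : AddAut ↥(tors W N)) (Z cA) - Z cA = c • Z h - Z h := by
      calc (h : AddAut ↥(tors W N)) (Z cA) - Z cA
          = (Z h + (h : AddAut ↥(tors W N)) (Z cA)) - Z h - Z cA := by abel
        _ = (Z cA + c • Z h) - Z h - Z cA := by rw [e1]
        _ = c • Z h - Z h := by abel
    have hfin : (a * c) • Z h = Z h + a • Z h := by
      rw [hcongr (a * c) (1 + a) hkey2 (Z h), add_smul, one_smul]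
    rw [map_nsmul, ← smul_sub, e4, smul_sub, smul_smul, hfin]
    abel


end LGD
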